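/- Let W be a standard one-dimensional Brownian motion, T>0, and f:ℝ→ℝ bounded and continuous. Define Ŵ(t) = W(T−t) and let β(t) = Ŵ(t) − W(T) + ∫_0^t Ŵ(s)/(T−s) ds, which is a Brownian motion with respect to the filtration H (the smallest complete filtration making W(T) measurable at time 0 and containing the natural filtration of β). Then the process L_ε(t) = ε^{−1}[f(εW), εW](t) admits the representation L_ε(t) = −∫_0^t f(εW(s)) dW(s) − ∫_{T−t}^T f(εŴ(s)) dβ(s) + ∫_0^t f(εW(s)) (W(s)/s) ds for t ∈ [0,T], i.e. L_ε is the sum of an F^W-martingale, the time reversal of an H-martingale, and a bounded variation term. -/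

import Mathlib

/-!
Fix `t` and take uniform partitions of `[0, t]` together with their images under `s ↦ T - s`.
Along them, `ε⁻¹` times the covariation sum is the difference of the right- and left-endpoint
Riemann sums of `f(εW)` against `W`. Since
`β (T - x) - β (T - y) = W x - W y + ∫ s in x..y, W s / s`, the right-endpoint sum is minus the
left-endpoint sum for `β` along the reflected partition, plus a Riemann–Stieltjes sum of `f(εW)`
against the primitive of `W s / s`. The latter converges pathwise to the drift integral because
`s ↦ W s / s` is a.s. integrable on `[0, T]`; the three other sums converge in probability, hence
a.s. along a common subsequence.
-/

open MeasureTheory ProbabilityTheory Filter Topology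

noncomputable section

/-- A finite partition of the interval `[a, b]`. -/
structure IccPartition (a b : ℝ) where
  n : ℕ
  npos : 0 < n
  u : ℕ → ℝ
  left : u 0 = a
  right : u n = b
  mono : ∀ i, i < n → u i ≤ u (i + 1)

/-- The mesh of a partition. -/
def IccPartition.mesh {a b : ℝ} (π : IccPartition a b) : ℝ :=
  ⨆ i : Fin π.n, (π.u (i + 1) - π.u i)

/-- The sum of products of increments of `X` and `Y` along a partition. -/
def covSum {Ω : Type*} {a b : ℝ} (X Y : ℝ → Ω → ℝ) (π : IccPartition a b) (ω : Ω) : ℝ :=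
  ∑ i ∈ Finset.range π.n,
    (X (π.u (i + 1)) ω - X (π.u i) ω) * (Y (π.u (i + 1)) ω - Y (π.u i) ω)

/-- Left-endpoint Riemann sum of `X` against the increments of `Y` along a partition. -/
def itoSum {Ω : Type*} {a b : ℝ} (X Y : ℝ → Ω → ℝ) (π : IccPartition a b) (ω : Ω) : ℝ :=
  ∑ i ∈ Finset.range π.n, X (π.u i) ω * (Y (π.u (i + 1)) ω - Y (π.u i) ω)

/-- `Q` is the quadratic covariation `[X, Y]` on `[a, b]`: the limit in probability of the
sums of products of increments along any sequence of partitions with mesh tending to `0`. -/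
def IsQuadCovar {Ω : Type*} [MeasurableSpace Ω] (P : Measure Ω)
    (X Y : ℝ → Ω → ℝ) (a b : ℝ) (Q : Ω → ℝ) : Prop :=
  ∀ π : ℕ → IccPartition a b,
    Tendsto (fun k => (π k).mesh) atTop (𝓝 0) →
      TendstoInMeasure P (fun k => covSum X Y (π k)) atTop Q

/-- `I` is the Itô integral `∫_a^b X dY`: the limit in probability of left-endpoint Riemann
sums along any sequence of partitions with mesh tending to `0`. -/
def IsItoIntegral {Ω : Type*} [MeasurableSpace Ω] (P : Measure Ω)
    (X Y : ℝ → Ω → ℝ) (a b : ℝ) (I : Ω → ℝ) : Prop :=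
  ∀ π : ℕ → IccPartition a b,
    Tendsto (fun k => (π k).mesh) atTop (𝓝 0) →
      TendstoInMeasure P (fun k => itoSum X Y (π k)) atTop I

/-- Modulus of continuity of `f`. -/
def osc (f : ℝ → ℝ) (δ : ℝ) : ℝ :=
  sSup {y | ∃ s t : ℝ, |s - t| < δ ∧ y = |f s - f t|}

/-- `W` is a standard one-dimensional Brownian motion under `P`. -/
def IsBrownianMotion {Ω : Type*} [MeasurableSpace Ω] (P : Measure Ω)
    (W : ℝ → Ω → ℝ) : Prop :=
  (∀ t : ℝ, Measurable (W t)) ∧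
  (∀ ω, W 0 ω = 0) ∧
  (∀ ω, Continuous fun t => W t ω) ∧
  (∀ s t : ℝ, 0 ≤ s → s ≤ t →
    Measure.map (fun ω => W t ω - W s ω) P = gaussianReal 0 (t - s).toNNReal) ∧
  (∀ s t : ℝ, 0 ≤ s → s ≤ t →
    Indep (MeasurableSpace.comap (fun ω => W t ω - W s ω) inferInstance)
      (⨆ u ∈ Set.Icc (0:ℝ) s, MeasurableSpace.comap (W u) inferInstance) P)

/-- `B` is a Brownian motion on `[0, T]` with respect to the filtration `F` under `P`. -/
def IsBMWithRespectTo {Ω : Type*} [MeasurableSpace Ω] (P : Measure Ω) (T : ℝ)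
    (F : ℝ → MeasurableSpace Ω) (B : ℝ → Ω → ℝ) : Prop :=
  (∀ t ∈ Set.Icc (0:ℝ) T, @Measurable Ω ℝ (F t) _ (B t)) ∧
  (∀ ω, B 0 ω = 0) ∧
  (∀ ω, ContinuousOn (fun t => B t ω) (Set.Icc 0 T)) ∧
  (∀ s t : ℝ, 0 ≤ s → s ≤ t → t ≤ T →
    Measure.map (fun ω => B t ω - B s ω) P = gaussianReal 0 (t - s).toNNReal) ∧
  (∀ s t : ℝ, 0 ≤ s → s ≤ t → t ≤ T →
    Indep (MeasurableSpace.comap (fun ω => B t ω - B s ω) inferInstance) (F s) P)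

namespace IccPartition

variable {a b : ℝ} (π : IccPartition a b)

lemma u_mem_Icc {i : ℕ} (hi : i ≤ π.n) : π.u i ∈ Set.Icc a b := by
  constructor
  · induction i with
    | zero => exact π.left.ge
    | succ i ih => exact (ih (by omega)).trans (π.mono i (by omega))
  · exact Nat.decreasingInduction (motive := fun i _ => π.u i ≤ b)
      (fun i hi ih => (π.mono i hi).trans ih) π.right.le hi

lemma uIcc_subset {i : ℕ} (hi : i < π.n) : Set.uIcc (π.u i) (π.u (i + 1)) ⊆ Set.uIcc a b :=
  Set.uIcc_subset_uIcc (Set.Icc_subset_uIcc (π.u_mem_Icc hi.le))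
    (Set.Icc_subset_uIcc (π.u_mem_Icc hi))

lemma sub_le_mesh {i : ℕ} (hi : i < π.n) : π.u (i + 1) - π.u i ≤ π.mesh :=
  le_ciSup (f := fun i : Fin π.n => π.u (i + 1) - π.u i) (Finite.bddAbove_range _) ⟨i, hi⟩

lemma sum_integral_eq {φ : ℝ → ℝ} (hφ : IntervalIntegrable φ volume a b) :
    ∑ i ∈ Finset.range π.n, ∫ s in π.u i..π.u (i + 1), φ s = ∫ s in a..b, φ s := by
  rw [intervalIntegral.sum_integral_adjacent_intervals (a := π.u)
    fun i hi => hφ.mono_set (π.uIcc_subset hi), π.left, π.right]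

def copy {a' b' : ℝ} (ha : a = a') (hb : b = b') : IccPartition a' b' where
  n := π.n
  npos := π.npos
  u := π.u
  left := π.left.trans ha
  right := π.right.trans hb
  mono := π.mono

lemma mesh_copy {a' b' : ℝ} (ha : a = a') (hb : b = b') : (π.copy ha hb).mesh = π.mesh := rfl

def reflect (T : ℝ) : IccPartition (T - b) (T - a) where
  n := π.n
  npos := π.npos
  u j := T - π.u (π.n - j)
  left := by rw [Nat.sub_zero, π.right]
  right := by rw [Nat.sub_self, π.left]
  mono j hj := by
    have := π.mono (π.n - (j + 1)) (by omega)
    rw [show π.n - (j + 1) + 1 = π.n - j by omega] at this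
    linarith

lemma mesh_reflect (T : ℝ) : (π.reflect T).mesh = π.mesh := by
  show ⨆ j : Fin π.n, (T - π.u (π.n - (j + 1))) - (T - π.u (π.n - j)) = π.mesh
  rw [mesh, ← Fin.revPerm.iSup_comp]
  congr 1
  ext j
  simp only [Fin.revPerm_apply, Fin.val_rev]
  rw [show π.n - (π.n - (j + 1) + 1) = j by omega, show π.n - (π.n - (j + 1)) = j + 1 by omega]
  ring

def uniform (a b : ℝ) (hab : a ≤ b) (k : ℕ) : IccPartition a b where
  n := k + 1
  npos := k.succ_pos
  u i := a + (b - a) * i / (k + 1)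
  left := by simp
  right := by push_cast; field_simp; ring
  mono i _ := by
    have : 0 ≤ (b - a) / (k + 1) := by positivity
    push_cast
    rw [mul_div_right_comm, mul_div_right_comm, mul_add, mul_one]
    linarith

lemma mesh_uniform (hab : a ≤ b) (k : ℕ) : (uniform a b hab k).mesh = (b - a) / (k + 1) := by
  simp only [mesh, uniform]
  push_cast
  simp_rw [show ∀ i : ℝ, a + (b - a) * (i + 1) / (k + 1) - (a + (b - a) * i / (k + 1))
    = (b - a) / (k + 1) by intro i; ring]
  exact ciSup_const

lemma tendsto_mesh_uniform (hab : a ≤ b) :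
    Tendsto (fun k => (uniform a b hab k).mesh) atTop (𝓝 0) := by
  simp_rw [mesh_uniform, div_eq_mul_inv]
  simpa using tendsto_one_div_add_atTop_nhds_zero_nat.const_mul (b - a)

end IccPartition

lemma itoSum_reflect {Ω : Type*} {a b : ℝ} (X Y : ℝ → Ω → ℝ) (π : IccPartition a b) (T : ℝ)
    (ω : Ω) :
    itoSum X Y (π.reflect T) ω = ∑ i ∈ Finset.range π.n,
      X (T - π.u (i + 1)) ω * (Y (T - π.u i) ω - Y (T - π.u (i + 1)) ω) := by
  rw [itoSum, ← Finset.sum_range_reflect]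
  refine Finset.sum_congr rfl fun i hi => ?_
  rw [Finset.mem_range] at hi
  simp only [IccPartition.reflect]
  rw [show π.n - (π.n - 1 - i) = i + 1 by omega, show π.n - (π.n - 1 - i + 1) = i by omega]

lemma abs_mul_integral_sub_integral_mul_le {g ψ : ℝ → ℝ} {x y c η : ℝ} (hxy : x ≤ y)
    (hψ : IntervalIntegrable ψ volume x y)
    (hgψ : IntervalIntegrable (fun s => g s * ψ s) volume x y)
    (hg : ∀ s ∈ Set.Icc x y, |c - g s| ≤ η) :
    |c * (∫ s in x..y, ψ s) - ∫ s in x..y, g s * ψ s| ≤ η * ∫ s in x..y, |ψ s| := by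
  rw [← intervalIntegral.integral_const_mul, ← intervalIntegral.integral_sub (hψ.const_mul c) hgψ,
    ← intervalIntegral.integral_const_mul]
  refine (intervalIntegral.abs_integral_le_integral_abs hxy).trans
    (intervalIntegral.integral_mono_on hxy ((hψ.const_mul c).sub hgψ).abs (hψ.abs.const_mul η)
      fun s hs => ?_)
  rw [← sub_mul, abs_mul]
  exact mul_le_mul_of_nonneg_right (hg s hs) (abs_nonneg _)

namespace IccPartition

variable {a b : ℝ} {g ψ : ℝ → ℝ}

lemma left_le_right (π : IccPartition a b) : a ≤ b :=
  (π.u_mem_Icc le_rfl).1.trans_eq π.right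

lemma abs_sum_mul_integral_sub_le (π : IccPartition a b) (hg : ContinuousOn g (Set.Icc a b))
    (hψ : IntervalIntegrable ψ volume a b) {η : ℝ}
    (hη : ∀ x ∈ Set.Icc a b, ∀ y ∈ Set.Icc a b, |x - y| ≤ π.mesh → |g x - g y| ≤ η) :
    |(∑ i ∈ Finset.range π.n, g (π.u (i + 1)) * ∫ s in π.u i..π.u (i + 1), ψ s)
        - ∫ s in a..b, g s * ψ s| ≤ η * ∫ s in a..b, |ψ s| := by
  have hgψ : IntervalIntegrable (fun s => g s * ψ s) volume a b :=
    hψ.continuousOn_mul (by rwa [Set.uIcc_of_le π.left_le_right])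
  rw [← π.sum_integral_eq hgψ, ← π.sum_integral_eq hψ.abs, Finset.mul_sum,
    ← Finset.sum_sub_distrib]
  refine (Finset.abs_sum_le_sum_abs _ _).trans (Finset.sum_le_sum fun i hi => ?_)
  rw [Finset.mem_range] at hi
  refine abs_mul_integral_sub_integral_mul_le (π.mono i hi) (hψ.mono_set (π.uIcc_subset hi))
    (hgψ.mono_set (π.uIcc_subset hi)) fun s hs => hη _ (π.u_mem_Icc hi) s
      ⟨(π.u_mem_Icc hi.le).1.trans hs.1, hs.2.trans (π.u_mem_Icc hi).2⟩ ?_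
  rw [abs_of_nonneg (by linarith [hs.2])]
  linarith [π.sub_le_mesh hi, hs.1]

lemma tendsto_sum_mul_integral {π : ℕ → IccPartition a b}
    (hπ : Tendsto (fun k => (π k).mesh) atTop (𝓝 0)) (hg : ContinuousOn g (Set.Icc a b))
    (hψ : IntervalIntegrable ψ volume a b) :
    Tendsto (fun k => ∑ i ∈ Finset.range (π k).n,
        g ((π k).u (i + 1)) * ∫ s in (π k).u i..(π k).u (i + 1), ψ s)
      atTop (𝓝 (∫ s in a..b, g s * ψ s)) := by
  set C := ∫ s in a..b, |ψ s|
  have hC : 0 ≤ C := intervalIntegral.integral_nonneg (π 0).left_le_right fun _ _ => abs_nonneg _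
  rw [Metric.tendsto_atTop]
  intro η hη
  obtain ⟨δ, hδ, hgδ⟩ := Metric.uniformContinuousOn_iff.1
    (isCompact_Icc.uniformContinuousOn_of_continuous hg) (η / (C + 1)) (by positivity)
  obtain ⟨N, hN⟩ := eventually_atTop.1 (hπ.eventually (gt_mem_nhds hδ))
  refine ⟨N, fun k hk => ?_⟩
  rw [Real.dist_eq]
  calc _ ≤ η / (C + 1) * C := (π k).abs_sum_mul_integral_sub_le hg hψ fun x hx y hy hxy =>
        (hgδ x hx y hy (hxy.trans_lt (hN k hk))).le
    _ < η := by
      rw [div_mul_eq_mul_div, div_lt_iff₀ (by positivity)]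
      nlinarith

end IccPartition

section Gaussian

open ENNReal NNReal

lemma lintegral_enorm_gaussianReal (v : ℝ≥0) :
    ∫⁻ x, ‖x‖ₑ ∂gaussianReal 0 v = ENNReal.ofReal √v * ∫⁻ x, ‖x‖ₑ ∂gaussianReal 0 1 := by
  have hscale : (gaussianReal 0 1).map (√v * ·) = gaussianReal 0 v := by
    rw [gaussianReal_map_const_mul, mul_zero, mul_one]
    exact congrArg _ (NNReal.eq (Real.sq_sqrt v.coe_nonneg))
  rw [← hscale, lintegral_map measurable_enorm (measurable_const_mul _)]
  simp_rw [enorm_mul]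
  rw [lintegral_const_mul _ measurable_enorm, Real.enorm_eq_ofReal (Real.sqrt_nonneg _)]

lemma lintegral_enorm_gaussianReal_ne_top (μ : ℝ) (v : ℝ≥0) :
    ∫⁻ x, ‖x‖ₑ ∂gaussianReal μ v ≠ ⊤ :=
  ((memLp_id_gaussianReal 1).integrable le_rfl).hasFiniteIntegral.ne

/-- By Tonelli, `E ∫₀ᵀ |X u| / u du = E|X 1| ∫₀ᵀ u^(-1/2) du < ∞`. -/
lemma ae_intervalIntegrable_div_self {Ω : Type*} [MeasurableSpace Ω] {P : Measure Ω}
    [SFinite P] {X : ℝ → Ω → ℝ} (hX : Measurable (Function.uncurry X))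
    (hlaw : ∀ u, 0 ≤ u → P.map (X u) = gaussianReal 0 u.toNNReal) {T : ℝ} (hT : 0 ≤ T) :
    ∀ᵐ ω ∂P, IntervalIntegrable (fun u => X u ω / u) volume 0 T := by
  set C := ∫⁻ x, ‖x‖ₑ ∂gaussianReal 0 1
  have hmoment : ∀ u ∈ Set.Ioc 0 T,
      ∫⁻ ω, ‖X u ω / u‖ₑ ∂P = C * ENNReal.ofReal (u ^ (-(1 / 2) : ℝ)) := by
    intro u hu
    have hXu : Measurable (X u) := hX.comp measurable_prodMk_left
    calc ∫⁻ ω, ‖X u ω / u‖ₑ ∂P = (∫⁻ ω, ‖X u ω‖ₑ ∂P) * ENNReal.ofReal u⁻¹ := by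
          simp_rw [div_eq_mul_inv, enorm_mul, Real.enorm_eq_ofReal (inv_nonneg.2 hu.1.le)]
          exact lintegral_mul_const _ hXu.enorm
      _ = ENNReal.ofReal √u * C * ENNReal.ofReal u⁻¹ := by
          rw [← lintegral_map measurable_enorm hXu, hlaw u hu.1.le, lintegral_enorm_gaussianReal,
            Real.coe_toNNReal _ hu.1.le]
      _ = C * ENNReal.ofReal (u ^ (-(1 / 2) : ℝ)) := by
          rw [mul_comm _ C, mul_assoc, ← ENNReal.ofReal_mul (Real.sqrt_nonneg _),
            ← div_eq_mul_inv, Real.sqrt_div_self', Real.rpow_neg hu.1.le, ← Real.sqrt_eq_rpow,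
            one_div]
  have hpath : Measurable fun p : Ω × ℝ => ‖X p.2 p.1 / p.2‖ₑ :=
    ((hX.comp measurable_swap).div measurable_snd).enorm
  have hfinite : ∫⁻ ω, (∫⁻ u in Set.Ioc 0 T, ‖X u ω / u‖ₑ) ∂P ≠ ⊤ := by
    rw [lintegral_lintegral_swap hpath.aemeasurable,
      setLIntegral_congr_fun measurableSet_Ioc hmoment,
      lintegral_const_mul _ (by fun_prop)]
    have hrpow := intervalIntegral.intervalIntegrable_rpow' (a := 0) (b := T)
      (r := -(1 / 2)) (by norm_num)
    rw [intervalIntegrable_iff_integrableOn_Ioc_of_le hT] at hrpow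
    exact ENNReal.mul_ne_top (lintegral_enorm_gaussianReal_ne_top 0 1)
      (lt_of_le_of_lt (lintegral_mono fun u => Real.ofReal_le_enorm _) hrpow.2).ne
  filter_upwards [ae_lt_top hpath.lintegral_prod_right' hfinite] with ω hω
  rw [intervalIntegrable_iff_integrableOn_Ioc_of_le hT]
  exact ⟨((hX.comp measurable_prodMk_right).div measurable_id).aestronglyMeasurable, hω⟩

end Gaussian

lemma MeasureTheory.TendstoInMeasure.prodMk {α ι E F : Type*} [MeasurableSpace α]
    {μ : Measure α} {l : Filter ι} [PseudoEMetricSpace E] [PseudoEMetricSpace F]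
    {f : ι → α → E} {g : α → E} {f' : ι → α → F} {g' : α → F}
    (hf : TendstoInMeasure μ f l g) (hf' : TendstoInMeasure μ f' l g') :
    TendstoInMeasure μ (fun i x => (f i x, f' i x)) l (fun x => (g x, g' x)) := by
  intro ε hε
  have hunion : ∀ i, {x | ε ≤ edist (f i x, f' i x) (g x, g' x)}
      = {x | ε ≤ edist (f i x) (g x)} ∪ {x | ε ≤ edist (f' i x) (g' x)} := fun i => by
    ext x
    simp [Prod.edist_eq]
  refine tendsto_of_tendsto_of_tendsto_of_le_of_le tendsto_const_nhds
    (by simpa using (hf ε hε).add (hf' ε hε)) (fun _ => zero_le) fun i => ?_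
  rw [hunion]
  exact measure_union_le _ _

section Reversal

variable {Ω : Type*} {W β : ℝ → Ω → ℝ} {T : ℝ}

lemma reversal_sub_eq (hβ : ∀ t ω, β t ω = W (T - t) ω - W T ω
      + ∫ s in (0:ℝ)..t, W (T - s) ω / (T - s))
    {ω : Ω} (hint : IntervalIntegrable (fun s => W s ω / s) volume 0 T) {x y : ℝ}
    (hx : x ∈ Set.Icc 0 T) (hy : y ∈ Set.Icc 0 T) :
    β (T - x) ω - β (T - y) ω = W x ω - W y ω + ∫ s in x..y, W s ω / s := by
  have hreverse : ∀ z, ∫ s in (0:ℝ)..T - z, W (T - s) ω / (T - s) = ∫ s in z..T, W s ω / s :=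
    fun z => (intervalIntegral.integral_comp_sub_left (fun s => W s ω / s) T).trans (by simp)
  have hint' : ∀ {c d}, c ∈ Set.Icc 0 T → d ∈ Set.Icc 0 T →
      IntervalIntegrable (fun s => W s ω / s) volume c d := fun hc hd =>
    hint.mono_set (Set.uIcc_subset_uIcc (Set.Icc_subset_uIcc hc) (Set.Icc_subset_uIcc hd))
  have hT : T ∈ Set.Icc 0 T := ⟨hx.1.trans hx.2, le_rfl⟩
  rw [hβ, hβ, hreverse, hreverse, sub_sub_cancel, sub_sub_cancel,
    ← intervalIntegral.integral_add_adjacent_intervals (hint' hx hy) (hint' hy hT)]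
  ring

lemma inv_mul_covSum_eq (f : ℝ → ℝ) {ε : ℝ} (hε : ε ≠ 0)
    (hβ : ∀ t ω, β t ω = W (T - t) ω - W T ω + ∫ s in (0:ℝ)..t, W (T - s) ω / (T - s))
    {ω : Ω} (hint : IntervalIntegrable (fun s => W s ω / s) volume 0 T) {a b : ℝ}
    (π : IccPartition a b) (ha : 0 ≤ a) (hb : b ≤ T) :
    ε⁻¹ * covSum (fun s ω => f (ε * W s ω)) (fun s ω => ε * W s ω) π ω
      = -itoSum (fun s ω => f (ε * W s ω)) W π ω
        - itoSum (fun s ω => f (ε * W (T - s) ω)) β (π.reflect T) ω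
        + ∑ i ∈ Finset.range π.n,
            f (ε * W (π.u (i + 1)) ω) * ∫ s in π.u i..π.u (i + 1), W s ω / s := by
  have hmem : ∀ {i}, i ≤ π.n → π.u i ∈ Set.Icc 0 T := fun hi =>
    ⟨ha.trans (π.u_mem_Icc hi).1, (π.u_mem_Icc hi).2.trans hb⟩
  rw [itoSum_reflect, covSum, itoSum, Finset.mul_sum, ← Finset.sum_neg_distrib,
    ← Finset.sum_sub_distrib, ← Finset.sum_add_distrib]
  refine Finset.sum_congr rfl fun i hi => ?_
  rw [Finset.mem_range] at hi
  simp only [sub_sub_cancel]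
  rw [reversal_sub_eq hβ hint (hmem hi.le) (hmem hi)]
  field_simp
  ring

end Reversal

theorem representation_of_normalized_quadratic_covariation_general
    {Ω : Type*} [MeasurableSpace Ω] (P : Measure Ω) [IsProbabilityMeasure P]
    (W : ℝ → Ω → ℝ) (hW : IsBrownianMotion P W)
    (T : ℝ)
    (f : ℝ → ℝ) (hfc : Continuous f)
    (ε : ℝ) (hε : 0 < ε)
    -- β(t) = Ŵ(t) - W(T) + ∫₀ᵗ Ŵ(s)/(T - s) ds, an H-Brownian motion
    (β : ℝ → Ω → ℝ)
    (hβ : ∀ t, ∀ ω, β t ω = W (T - t) ω - W T ω + ∫ s in (0:ℝ)..t, W (T - s) ω / (T - s))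
    -- Q t = [f(εW), εW](t), S₁ t = ∫₀ᵗ f(εW(s)) dW(s), S₂ t = ∫_{T-t}^T f(εŴ(s)) dβ(s)
    (Q S₁ S₂ : ℝ → Ω → ℝ)
    (hQ : ∀ t ∈ Set.Icc (0:ℝ) T,
      IsQuadCovar P (fun s ω => f (ε * W s ω)) (fun s ω => ε * W s ω) 0 t (Q t))
    (hS₁ : ∀ t ∈ Set.Icc (0:ℝ) T,
      IsItoIntegral P (fun s ω => f (ε * W s ω)) W 0 t (S₁ t))
    (hS₂ : ∀ t ∈ Set.Icc (0:ℝ) T,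
      IsItoIntegral P (fun s ω => f (ε * W (T - s) ω)) β (T - t) T (S₂ t)) :
    ∀ t ∈ Set.Icc (0:ℝ) T, ∀ᵐ ω ∂P,
      ε⁻¹ * Q t ω = -S₁ t ω - S₂ t ω + ∫ s in (0:ℝ)..t, f (ε * W s ω) * (W s ω / s) := by
  intro t ht
  obtain ⟨hWmeas, hW0, hWcont, hWlaw, -⟩ := hW
  have hint := ae_intervalIntegrable_div_self
    (measurable_uncurry_of_continuous_of_measurable hWcont hWmeas)
    (fun u hu => by simpa [hW0] using hWlaw 0 u le_rfl hu) (ht.1.trans ht.2)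
  set π := IccPartition.uniform 0 t ht.1
  have hπ := IccPartition.tendsto_mesh_uniform ht.1
  set ρ := fun k => ((π k).reflect T).copy rfl (sub_zero T)
  have hρ : Tendsto (fun k => (ρ k).mesh) atTop (𝓝 0) := by
    simpa only [ρ, IccPartition.mesh_copy, IccPartition.mesh_reflect] using hπ
  obtain ⟨ns, hns, hlim⟩ :=
    (((hQ t ht π hπ).prodMk (hS₁ t ht π hπ)).prodMk (hS₂ t ht ρ hρ)).exists_seq_tendsto_ae
  filter_upwards [hint, hlim] with ω hint hlim
  have hdrift := IccPartition.tendsto_sum_mul_integral (g := fun s => f (ε * W s ω))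
    (ψ := fun s => W s ω / s) hπ
    (hfc.comp (continuous_const.mul (hWcont ω))).continuousOn
    (hint.mono_set (Set.uIcc_subset_uIcc Set.left_mem_uIcc (Set.Icc_subset_uIcc ht)))
  refine tendsto_nhds_unique (hlim.fst_nhds.fst_nhds.const_mul ε⁻¹) ?_
  refine ((hlim.fst_nhds.snd_nhds.neg.sub hlim.snd_nhds).add
    (hdrift.comp hns.tendsto_atTop)).congr fun k => ?_
  exact (inv_mul_covSum_eq f hε.ne' hβ hint (π (ns k)) le_rfl ht.2).symm

/-- Corollary 1 of the paper: representation of `L_ε = ε⁻¹[f(εW), εW]`. -/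
theorem representation_of_normalized_quadratic_covariation
    {Ω : Type*} [MeasurableSpace Ω] (P : Measure Ω) [IsProbabilityMeasure P]
    (W : ℝ → Ω → ℝ) (hW : IsBrownianMotion P W)
    (T : ℝ) (hT : 0 < T)
    (f : ℝ → ℝ) (hfb : ∃ M : ℝ, ∀ x, |f x| ≤ M) (hfc : Continuous f)
    (ε : ℝ) (hε : 0 < ε)
    -- β(t) = Ŵ(t) - W(T) + ∫₀ᵗ Ŵ(s)/(T - s) ds, an H-Brownian motion
    (β : ℝ → Ω → ℝ)
    (hβ : ∀ t, ∀ ω, β t ω = W (T - t) ω - W T ω + ∫ s in (0:ℝ)..t, W (T - s) ω / (T - s))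
    (hβBM : IsBMWithRespectTo P T
      (fun t => MeasurableSpace.comap (W T) inferInstance ⊔
        ⨆ u ∈ Set.Icc (0:ℝ) t, MeasurableSpace.comap (β u) inferInstance) β)
    -- Q t = [f(εW), εW](t), S₁ t = ∫₀ᵗ f(εW(s)) dW(s), S₂ t = ∫_{T-t}^T f(εŴ(s)) dβ(s)
    (Q S₁ S₂ : ℝ → Ω → ℝ)
    (hQ : ∀ t ∈ Set.Icc (0:ℝ) T,
      IsQuadCovar P (fun s ω => f (ε * W s ω)) (fun s ω => ε * W s ω) 0 t (Q t))
    (hS₁ : ∀ t ∈ Set.Icc (0:ℝ) T,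
      IsItoIntegral P (fun s ω => f (ε * W s ω)) W 0 t (S₁ t))
    (hS₂ : ∀ t ∈ Set.Icc (0:ℝ) T,
      IsItoIntegral P (fun s ω => f (ε * W (T - s) ω)) β (T - t) T (S₂ t)) :
    ∀ t ∈ Set.Icc (0:ℝ) T, ∀ᵐ ω ∂P,
      ε⁻¹ * Q t ω = -S₁ t ω - S₂ t ω + ∫ s in (0:ℝ)..t, f (ε * W s ω) * (W s ω / s) :=
  representation_of_normalized_quadratic_covariation_general P W hW T f hfc ε hε β hβ Q S₁ S₂ hQ hS₁
    hS₂
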